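/- (Two-signal equilibrium equation.) For α ≥ 0 let Z_α be a real Gaussian random variable with mean α² and variance 2α² (for α = 0, Z_α = α² a.s.), set p_1 = e^{Z_α}/(e^{Z_α} + 1), p_2 = 1/(e^{Z_α} + 1), and define Φ(α) = 1 − E[p_1] − α²·E[p_1 p_2]. Then Φ(0) = 1/2, and there exists α* > 0 with Φ(α*) = 0. -/

import Mathlib

/-!
When the variance of a Gaussian `Z` is twice its mean, its density satisfies
`φ(-z) = e^{-z} φ(z)`, so `E[g(-Z)] = E[e^{-Z} g(Z)]` for every `g`. Applied to the even function
`p₁p₂`, and using `e^{-z} p₁(z) = p₂(z)`, this gives `E[p₁p₂] = E[p₂²]`, hence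
`E[p₂] = E[p₂(p₁ + p₂)] = 2 E[p₁p₂]` and `Φ(α) = (2 - α²) E[p₁p₂]`.
So `Φ(0) = 2 · 1/4` and `Φ(√2) = 0`.
-/

open MeasureTheory ProbabilityTheory

noncomputable section

/-- The law of `Z_α`: Gaussian on `ℝ` with mean `α²` and variance `2α²`
(for `α = 0` this is the point mass at `0 = α²`). -/
def lawZ2 (α : ℝ) : Measure ℝ :=
  gaussianReal (α ^ 2) (Real.toNNReal (2 * α ^ 2))

/-- The two-signal equilibrium equation function
`Φ(α) = 1 − E[p₁] − α²·E[p₁p₂]`, where `p₁ = e^{Z_α}/(e^{Z_α}+1)` and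
`p₂ = 1/(e^{Z_α}+1)`. -/
def Phi2 (α : ℝ) : ℝ :=
  1 - (∫ z, Real.exp z / (Real.exp z + 1) ∂(lawZ2 α)) -
    α ^ 2 * ∫ z, (Real.exp z / (Real.exp z + 1)) * (1 / (Real.exp z + 1)) ∂(lawZ2 α)

open Real

lemma Real.exp_div_exp_add_one (x : ℝ) : exp x / (exp x + 1) = sigmoid x := by
  rw [sigmoid_def, exp_neg]
  field_simp

lemma Real.one_div_exp_add_one (x : ℝ) : 1 / (exp x + 1) = sigmoid (-x) := by
  rw [sigmoid_def, neg_neg]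
  field_simp
  ring

lemma Real.norm_sigmoid_le_one (x : ℝ) : ‖sigmoid x‖ ≤ 1 := by
  rw [norm_of_nonneg (sigmoid_nonneg x)]
  exact sigmoid_le_one x

lemma integrable_sigmoid_comp {μ : Measure ℝ} [IsFiniteMeasure μ] {f : ℝ → ℝ}
    (hf : AEStronglyMeasurable f μ) : Integrable (fun z => sigmoid (f z)) μ :=
  .of_bound (continuous_sigmoid.comp_aestronglyMeasurable hf) 1
    (ae_of_all _ fun _ => norm_sigmoid_le_one _)

lemma integrable_sigmoid_comp_mul_sigmoid_comp {μ : Measure ℝ} [IsFiniteMeasure μ]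
    {f g : ℝ → ℝ} (hf : AEStronglyMeasurable f μ) (hg : AEStronglyMeasurable g μ) :
    Integrable (fun z => sigmoid (f z) * sigmoid (g z)) μ :=
  (integrable_sigmoid_comp hg).bdd_mul (continuous_sigmoid.comp_aestronglyMeasurable hf)
    (ae_of_all _ fun _ => norm_sigmoid_le_one _)

lemma integral_sigmoid_neg (μ : Measure ℝ) [IsProbabilityMeasure μ] :
    ∫ z, sigmoid (-z) ∂μ = 1 - ∫ z, sigmoid z ∂μ := by
  simp only [sigmoid_neg]
  rw [integral_sub (integrable_const 1) (integrable_sigmoid_comp (f := fun z => z) (by fun_prop))]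
  simp

namespace ProbabilityTheory

variable {m : ℝ} {v : NNReal}

lemma gaussianPDFReal_neg_of_var_eq_two_mul_mean (hv : (v : ℝ) = 2 * m) (z : ℝ) :
    gaussianPDFReal m v (-z) = exp (-z) * gaussianPDFReal m v z := by
  rcases eq_or_ne v 0 with rfl | hv0
  · simp
  have hv_ne : (v : ℝ) ≠ 0 := by exact_mod_cast hv0
  rw [gaussianPDFReal, gaussianPDFReal, mul_left_comm, ← exp_add]
  congr 2
  field_simp
  rw [hv]
  ring

lemma integral_comp_neg_gaussianReal_of_var_eq_two_mul_mean (hv : (v : ℝ) = 2 * m)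
    (g : ℝ → ℝ) :
    ∫ z, g (-z) ∂gaussianReal m v = ∫ z, exp (-z) * g z ∂gaussianReal m v := by
  rcases eq_or_ne v 0 with rfl | hv0
  · obtain rfl : m = 0 := by simpa [eq_comm] using hv
    simp [gaussianReal_zero_var, integral_dirac]
  simp only [integral_gaussianReal_eq_integral_smul hv0, smul_eq_mul]
  rw [← integral_neg_eq_self]
  simp only [neg_neg, gaussianPDFReal_neg_of_var_eq_two_mul_mean hv, mul_assoc, mul_left_comm]

lemma integral_sigmoid_neg_gaussianReal_of_var_eq_two_mul_mean (hv : (v : ℝ) = 2 * m) :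
    ∫ z, sigmoid (-z) ∂gaussianReal m v =
      2 * ∫ z, sigmoid z * sigmoid (-z) ∂gaussianReal m v := by
  have h_even : ∫ z, sigmoid z * sigmoid (-z) ∂gaussianReal m v =
      ∫ z, sigmoid (-z) * sigmoid (-z) ∂gaussianReal m v := by
    calc ∫ z, sigmoid z * sigmoid (-z) ∂gaussianReal m v
        = ∫ z, sigmoid (-z) * sigmoid (-(-z)) ∂gaussianReal m v := by
          simp only [neg_neg, mul_comm]
      _ = ∫ z, exp (-z) * (sigmoid z * sigmoid (-z)) ∂gaussianReal m v :=
        integral_comp_neg_gaussianReal_of_var_eq_two_mul_mean hv fun z => sigmoid z * sigmoid (-z)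
      _ = ∫ z, sigmoid (-z) * sigmoid (-z) ∂gaussianReal m v := by
        refine integral_congr_ae (ae_of_all _ fun z => ?_)
        dsimp only
        rw [mul_left_comm, ← mul_assoc, sigmoid_mul_rexp_neg]
  have h_split : ∫ z, sigmoid (-z) ∂gaussianReal m v =
      ∫ z, sigmoid z * sigmoid (-z) + sigmoid (-z) * sigmoid (-z) ∂gaussianReal m v := by
    simp only [← add_mul, sigmoid_neg, add_sub_cancel, one_mul]
  rw [h_split, integral_add, ← h_even, two_mul]
  all_goals exact integrable_sigmoid_comp_mul_sigmoid_comp (by fun_prop) (by fun_prop)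

end ProbabilityTheory

lemma Phi2_eq_mul (α : ℝ) :
    Phi2 α = (2 - α ^ 2) * ∫ z, sigmoid z * sigmoid (-z) ∂lawZ2 α := by
  have hv : ((2 * α ^ 2).toNNReal : ℝ) = 2 * α ^ 2 := Real.coe_toNNReal _ (by positivity)
  have h := integral_sigmoid_neg_gaussianReal_of_var_eq_two_mul_mean hv
  simp only [Phi2, lawZ2, exp_div_exp_add_one, one_div_exp_add_one]
  linear_combination h - integral_sigmoid_neg (gaussianReal (α ^ 2) (2 * α ^ 2).toNNReal)

/-- `Φ(0) = 1/2`, and there exists `α* > 0` with `Φ(α*) = 0`. -/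
theorem two_signal_equilibrium_equation :
    Phi2 0 = 1 / 2 ∧ ∃ αStar : ℝ, 0 < αStar ∧ Phi2 αStar = 0 := by
  refine ⟨?_, √2, by positivity, ?_⟩
  · simp [Phi2_eq_mul, lawZ2, integral_dirac]
  · rw [Phi2_eq_mul, sq_sqrt zero_le_two, sub_self, zero_mul]

end
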